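/- Let T be a spanning tree of a graph G=(V,E). If (S,J) is a 2-edge-connected subgraph of G, then the forest T_{J∖E(T)} (the union of tree paths T_f over edges f ∈ J∖E(T)) is a tree, i.e., connected. -/

import Mathlib

/-!
Every edge of `J` has its endpoints joined in `H = T_{J ∖ E(T)}`: for a non-tree edge this is its
own tree path; for a tree edge `uv`, removing `uv` from `T` splits the vertices into a `u`-side and
a `v`-side, and since `J - uv` still joins `u` to `v`, some other edge `g` of `J` crosses this cut.
The tree path of `g` must then use `uv`, and `g` is not a tree edge (its tree path would be `g`
itself), so `uv ∈ H`. Hence `H` is at least as connected as `J`, and every vertex of `H` lies on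
the tree path of an edge of `J`.
-/

open SimpleGraph
variable {V : Type*}
noncomputable def treeWalk (T : SimpleGraph V) (hT : T.IsTree) (u v : V) : T.Walk u v :=
  (hT.existsUnique_path u v).choose
noncomputable def pathSupport (T : SimpleGraph V) (hT : T.IsTree) (f : V × V) : Set V :=
  {v | v ∈ (treeWalk T hT f.1 f.2).support}
noncomputable def pathEdges (T : SimpleGraph V) (hT : T.IsTree) (f : V × V) : Set (Sym2 V) :=
  {e | e ∈ (treeWalk T hT f.1 f.2).edges}
noncomputable def unionPaths (T : SimpleGraph V) (hT : T.IsTree) (F : Set (V × V)) : SimpleGraph V :=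
  SimpleGraph.fromEdgeSet (⋃ f ∈ F, pathEdges T hT f)
def pairGraph (F : Set (V × V)) : SimpleGraph V :=
  SimpleGraph.fromEdgeSet {e | ∃ f ∈ F, e = s(f.1, f.2)}
def ConnOn (H : SimpleGraph V) : Prop :=
  H.support.Nonempty ∧ ∀ u ∈ H.support, ∀ v ∈ H.support, H.Reachable u v
def TwoEdgeConnected (H : SimpleGraph V) : Prop :=
  H.support.Nontrivial ∧ (∀ u ∈ H.support, ∀ v ∈ H.support, H.Reachable u v) ∧
    ∀ e ∈ H.edgeSet, ∀ u ∈ H.support, ∀ v ∈ H.support, (H.deleteEdges {e}).Reachable u v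

namespace SimpleGraph

lemma Reachable.of_forall_adj {G H : SimpleGraph V}
    (h : ∀ ⦃x y⦄, G.Adj x y → H.Reachable x y) {u v : V} (huv : G.Reachable u v) : H.Reachable u v := by
  obtain ⟨p⟩ := huv
  induction p with
  | nil => rfl
  | cons hadj _ ih => exact (h hadj).trans ih

lemma Connected.reachable_deleteEdges_or {G : SimpleGraph V} (hG : G.Connected) (u v x : V) :
    (G.deleteEdges {s(u, v)}).Reachable x u ∨ (G.deleteEdges {s(u, v)}).Reachable x v := by
  set R := (G.deleteEdges {s(u, v)}).Reachable
  by_contra hx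
  obtain ⟨d, -, hd, hd'⟩ :=
    (hG.preconnected u x).some.exists_boundary_dart {y | R y u ∨ R y v} (Or.inl .rfl) hx
  apply hd'
  by_cases he : s(d.fst, d.snd) = s(u, v)
  · rcases Sym2.eq_iff.mp he with ⟨-, h⟩ | ⟨-, h⟩
    · exact Or.inr (h ▸ .rfl)
    · exact Or.inl (h ▸ .rfl)
  · have hadj : (G.deleteEdges {s(u, v)}).Adj d.snd d.fst := by
      simpa [deleteEdges_adj, d.adj.symm, Sym2.eq_swap] using he
    exact hd.imp hadj.reachable.trans hadj.reachable.trans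

end SimpleGraph

section TreePaths

variable {T : SimpleGraph V} (hT : T.IsTree)

lemma treeWalk_isPath (u v : V) : (treeWalk T hT u v).IsPath :=
  (hT.existsUnique_path u v).choose_spec.1

lemma treeWalk_edges_of_adj {u v : V} (h : T.Adj u v) : (treeWalk T hT u v).edges = [s(u, v)] := by
  have hp : (Walk.cons h Walk.nil).IsPath := by simp [h.ne]
  have huniq := (hT.existsUnique_path u v).choose_spec.2 _ hp
  rw [treeWalk, ← huniq]
  rfl

lemma ne_of_mem_treeWalk_edges {u v : V} {e : Sym2 V} (he : e ∈ (treeWalk T hT u v).edges) :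
    u ≠ v := by
  rintro rfl
  have hnil := Walk.edges_eq_nil.mpr (Walk.isPath_iff_nil.mp (treeWalk_isPath hT u u))
  simp [hnil] at he

lemma unionPaths_adj_of_mem_treeWalk_edges {F : Set (V × V)} {f : V × V} (hf : f ∈ F) {x y : V}
    (he : s(x, y) ∈ (treeWalk T hT f.1 f.2).edges) : (unionPaths T hT F).Adj x y := by
  rw [unionPaths, fromEdgeSet_adj]
  exact ⟨Set.mem_iUnion₂.mpr ⟨f, hf, he⟩, (Walk.adj_of_mem_edges _ he).ne⟩

lemma unionPaths_reachable_of_mem_treeWalk_support {F : Set (V × V)} {f : V × V} (hf : f ∈ F)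
    {z : V} (hz : z ∈ (treeWalk T hT f.1 f.2).support) : (unionPaths T hT F).Reachable f.1 z := by
  classical
  let p := (treeWalk T hT f.1 f.2).transfer (unionPaths T hT F) fun e he => by
    induction e using Sym2.ind
    exact unionPaths_adj_of_mem_treeWalk_edges hT hf he
  exact ⟨p.takeUntil z (by simpa [p, Walk.support_transfer] using hz)⟩

lemma exists_reachable_of_mem_support_unionPaths {F : Set (V × V)} {z : V}
    (hz : z ∈ (unionPaths T hT F).support) :
    ∃ f ∈ F, f.1 ≠ f.2 ∧ (unionPaths T hT F).Reachable f.1 z := by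
  obtain ⟨c, hzc⟩ := hz
  obtain ⟨hmem, -⟩ := (fromEdgeSet_adj _).mp hzc
  obtain ⟨f, hf, he⟩ := Set.mem_iUnion₂.mp hmem
  exact ⟨f, hf, ne_of_mem_treeWalk_edges hT he,
    unionPaths_reachable_of_mem_treeWalk_support hT hf (Walk.fst_mem_support_of_mem_edges _ he)⟩

end TreePaths

section NonTreePaths

variable {T : SimpleGraph V} (hT : T.IsTree) {J : Set (V × V)}

lemma pairGraph_adj_of_mem {g : V × V} (hg : g ∈ J) (hne : g.1 ≠ g.2) :
    (pairGraph J).Adj g.1 g.2 :=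
  (fromEdgeSet_adj _).mpr ⟨⟨g, hg, rfl⟩, hne⟩

lemma unionPaths_adj_of_reachable_deleteEdges {u v : V} (huv : T.Adj u v)
    (hJ : ((pairGraph J).deleteEdges {s(u, v)}).Reachable u v) :
    (unionPaths T hT {e ∈ J | ¬ T.Adj e.1 e.2}).Adj u v := by
  set R := (T.deleteEdges {s(u, v)}).Reachable
  have hbridge : ¬ R u v := isBridge_iff.mp (isAcyclic_iff_forall_adj_isBridge.mp hT.isAcyclic huv)
  obtain ⟨W⟩ := hJ
  obtain ⟨d, -, hdu, hdv⟩ :=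
    W.exists_boundary_dart {z | R z u} (Reachable.refl u) fun h => hbridge (Reachable.symm h)
  have hdv' : R d.snd v := (hT.connected.reachable_deleteEdges_or u v d.snd).resolve_left hdv
  have hcut : ¬ R d.fst d.snd := fun h => hbridge (hdu.symm.trans (h.trans hdv'))
  obtain ⟨⟨⟨g, hgJ, hg⟩, -⟩, hgne⟩ := deleteEdges_adj.mp d.adj
  have hgcut : ¬ R g.1 g.2 := by
    rcases Sym2.eq_iff.mp hg with ⟨h1, h2⟩ | ⟨h1, h2⟩
    · rwa [← h1, ← h2]
    · rw [← h1, ← h2]; exact fun h => hcut h.symm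
  have hcross := (treeWalk T hT g.1 g.2).mem_edges_of_not_reachable_deleteEdges hgcut
  have hg_nontree : ¬ T.Adj g.1 g.2 := fun hadj => hgne <| by
    rw [treeWalk_edges_of_adj hT hadj, List.mem_singleton] at hcross
    rw [Set.mem_singleton_iff, hg, hcross]
  exact unionPaths_adj_of_mem_treeWalk_edges hT (Set.mem_sep hgJ hg_nontree) hcross

lemma unionPaths_reachable_of_mem (hJ : TwoEdgeConnected (pairGraph J)) {g : V × V} (hgJ : g ∈ J)
    (hne : g.1 ≠ g.2) : (unionPaths T hT {e ∈ J | ¬ T.Adj e.1 e.2}).Reachable g.1 g.2 := by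
  by_cases htree : T.Adj g.1 g.2
  · have hpg := pairGraph_adj_of_mem hgJ hne
    exact (unionPaths_adj_of_reachable_deleteEdges hT htree <|
      hJ.2.2 s(g.1, g.2) hpg _ ((mem_support _).mpr ⟨_, hpg⟩) _
        ((mem_support _).mpr ⟨_, hpg.symm⟩)).reachable
  · exact unionPaths_reachable_of_mem_treeWalk_support hT (Set.mem_sep hgJ htree)
      (Walk.end_mem_support _)

lemma unionPaths_reachable_of_pairGraph_reachable (hJ : TwoEdgeConnected (pairGraph J)) {x y : V}
    (hxy : (pairGraph J).Reachable x y) :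
    (unionPaths T hT {e ∈ J | ¬ T.Adj e.1 e.2}).Reachable x y := by
  refine hxy.of_forall_adj fun x y hadj => ?_
  obtain ⟨⟨g, hgJ, hg⟩, hne⟩ := (fromEdgeSet_adj _).mp hadj
  rcases Sym2.eq_iff.mp hg with ⟨rfl, rfl⟩ | ⟨rfl, rfl⟩
  exacts [unionPaths_reachable_of_mem hT hJ hgJ hne,
    (unionPaths_reachable_of_mem hT hJ hgJ hne.symm).symm]

lemma exists_mem_support_pairGraph_reachable {F : Set (V × V)} (hF : F ⊆ J) {z : V}
    (hz : z ∈ (unionPaths T hT F).support) :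
    ∃ r ∈ (pairGraph J).support, (unionPaths T hT F).Reachable r z := by
  obtain ⟨f, hf, hne, hfz⟩ := exists_reachable_of_mem_support_unionPaths hT hz
  exact ⟨f.1, ⟨f.2, pairGraph_adj_of_mem (hF hf) hne⟩, hfz⟩

end NonTreePaths

theorem stmt1_general (T : SimpleGraph V) (hT : T.IsTree)
    (J : Set (V × V))
    (h2ec : TwoEdgeConnected (pairGraph J)) :
    ConnOn (unionPaths T hT {e ∈ J | ¬ T.Adj e.1 e.2}) := by
  refine ⟨?_, fun u hu v hv => ?_⟩
  · obtain ⟨a, ha, -⟩ := h2ec.1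
    obtain ⟨c, hac⟩ := (mem_support _).mp ha
    exact ⟨a, mem_support_of_reachable hac.ne
      (unionPaths_reachable_of_pairGraph_reachable hT h2ec hac.reachable)⟩
  · obtain ⟨r, hr, hru⟩ := exists_mem_support_pairGraph_reachable hT (Set.sep_subset J _) hu
    obtain ⟨s, hs, hsv⟩ := exists_mem_support_pairGraph_reachable hT (Set.sep_subset J _) hv
    exact hru.symm.trans
      ((unionPaths_reachable_of_pairGraph_reachable hT h2ec (h2ec.2.1 r hr s hs)).trans hsv)

/-- If `(S, J)` is a 2-edge-connected subgraph of `G` (with spanning tree `T`),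
then the union of tree paths of the non-tree edges of `J` is a tree (connected). -/
theorem stmt1 (G T : SimpleGraph V) (hle : T ≤ G) (hT : T.IsTree)
    (S : Set V) (J : Set (V × V))
    (hJG : ∀ e ∈ J, G.Adj e.1 e.2) (hJS : ∀ e ∈ J, e.1 ∈ S ∧ e.2 ∈ S)
    (h2ec : TwoEdgeConnected (pairGraph J)) :
    ConnOn (unionPaths T hT {e ∈ J | ¬ T.Adj e.1 e.2}) :=
  stmt1_general T hT J h2ec
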